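/- Let t ≥ 1/√2 and ε = −1. Then (0,0) is neither a local minimum nor a local maximum of F_{t,−1}: every neighborhood of the origin contains points p with F_{t,−1}(p) < 0 and points p with F_{t,−1}(p) > 0, where F_{t,−1}(0,0) = 0. -/
import Mathlib


/-- The Karigiannis–Leung Chern–Simons type functional, evaluated on the
connections A = i(a₁η₁ + a₂η₂ + a₃η₃) on the trivial complex line bundle over a
compact 3-Sasakian 7-manifold with the coclosed G₂-structure φ_{t,ε}
(normalized so that Vol(X, g^{ts}) = 1), with x = a₃ and y² = a₁² + a₂²:
F_{t,ε}(x,y) = −[(x² + y²)(2(x² + y²) − 1) + 2t²(x² + εy²)]. -/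
def F (t ε : ℝ) : ℝ × ℝ → ℝ := fun p =>
  -((p.1 ^ 2 + p.2 ^ 2) * (2 * (p.1 ^ 2 + p.2 ^ 2) - 1) + 2 * t ^ 2 * (p.1 ^ 2 + ε * p.2 ^ 2))

/-- For t ≥ 1/√2 and ε = −1, the origin (the trivial flat connection) is
neither a local minimum nor a local maximum of F_{t,−1}: every neighborhood of
the origin contains points where F_{t,−1} < 0 and points where F_{t,−1} > 0,
while F_{t,−1}(0,0) = 0. -/
theorem stmt_14 (t : ℝ) (ht : 1 / Real.sqrt 2 ≤ t) :
    F t (-1) (0, 0) = 0 ∧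
    ∀ U ∈ nhds ((0, 0) : ℝ × ℝ),
      (∃ p ∈ U, F t (-1) p < 0) ∧ (∃ p ∈ U, 0 < F t (-1) p) := by
  have hs2 : (0:ℝ) < Real.sqrt 2 := Real.sqrt_pos.mpr (by norm_num)
  have ht2 : (1:ℝ)/2 ≤ t ^ 2 := by
    have h0 : (0:ℝ) ≤ 1 / Real.sqrt 2 := by positivity
    have := mul_self_le_mul_self h0 ht
    calc (1:ℝ)/2 = (1 / Real.sqrt 2) * (1 / Real.sqrt 2) := by
          rw [div_mul_div_comm, one_mul, Real.mul_self_sqrt (by norm_num)]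
      _ ≤ t * t := this
      _ = t ^ 2 := (sq t).symm
  refine ⟨by simp [F], fun U hU => ?_⟩
  obtain ⟨δ, hδ, hball⟩ := Metric.mem_nhds_iff.mp hU
  constructor
  · set x : ℝ := δ / 2 with hx
    have hx0 : 0 < x := by positivity
    refine ⟨(x, 0), hball ?_, ?_⟩
    · simp only [Metric.mem_ball, Prod.dist_eq, Real.dist_eq, sub_zero]
      simp [abs_of_pos hx0, abs_of_nonneg]
      constructor <;> linarith
    · show -((x ^ 2 + 0 ^ 2) * (2 * (x ^ 2 + 0 ^ 2) - 1) + 2 * t ^ 2 * (x ^ 2 + (-1) * 0 ^ 2)) < 0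
      have hx2 : 0 < x ^ 2 := by positivity
      have hx4 : 0 < x ^ 4 := by positivity
      nlinarith [mul_le_mul_of_nonneg_right ht2 hx2.le]
  · set y : ℝ := min (δ / 2) (1 / 2) with hy
    have hy0 : 0 < y := by positivity
    have hyδ : y < δ := lt_of_le_of_lt (min_le_left _ _) (by linarith)
    have hyh : y ≤ 1/2 := min_le_right _ _
    refine ⟨(0, y), hball ?_, ?_⟩
    · simp only [Metric.mem_ball, Prod.dist_eq, Real.dist_eq, sub_zero]
      simp [abs_of_pos hy0, abs_of_nonneg]
      constructor <;> linarith
    · show 0 < -((0 ^ 2 + y ^ 2) * (2 * (0 ^ 2 + y ^ 2) - 1) + 2 * t ^ 2 * (0 ^ 2 + (-1) * y ^ 2))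
      have hy2 : 0 < y ^ 2 := by positivity
      have : y ^ 2 ≤ 1/4 := by nlinarith
      nlinarith [mul_le_mul_of_nonneg_right ht2 hy2.le]
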